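/- Let G = (V_L ∪ V_R, E) be a bipartite α-expander for some α ∈ (0,1) with maximum degree at most Δ ≥ 1, and let λ ∈ ℝ satisfy λ ≥ (e·Δ²/0.8)^{1/α}. Consider the left hard-core polymer model on G. Then for every polymer S, ∑_{S' incompatible with S} |S'| · λ^{|S'|}/(1+λ)^{|N_G(S')|} ≤ |S| (the sum including S' = S); consequently the left hard-core polymer model satisfies the clique dynamics condition with f(S) = |S|. -/

import Mathlib

open scoped Classical

/-- `nbhd G S` is the set `N_G(S)` of all vertices adjacent to some vertex of `S`. -/
noncomputable def nbhd {V : Type*} [Fintype V] (G : SimpleGraph V) (S : Finset V) :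
    Finset V :=
  Finset.univ.filter fun v => ∃ u ∈ S, G.Adj u v

/-- `G` is bipartite with parts `VL` and `VR`. -/
def IsBipartition {V : Type*} [Fintype V] (G : SimpleGraph V) (VL VR : Finset V) : Prop :=
  Disjoint VL VR ∧ VL ∪ VR = Finset.univ ∧
    ∀ u v, G.Adj u v → (u ∈ VL ∧ v ∈ VR) ∨ (u ∈ VR ∧ v ∈ VL)

/-- `G` is a bipartite `α`-expander with parts `VL` and `VR`: every subset `S` of one
side with `|S| ≤ |V_i|/2` satisfies `|N_G(S)| ≥ (1+α)|S|`. -/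
def IsBipartiteExpander {V : Type*} [Fintype V] (G : SimpleGraph V) (VL VR : Finset V)
    (α : ℝ) : Prop :=
  IsBipartition G VL VR ∧
    (∀ S ⊆ VL, (S.card : ℝ) ≤ (VL.card : ℝ) / 2 →
      (1 + α) * (S.card : ℝ) ≤ ((nbhd G S).card : ℝ)) ∧
    (∀ S ⊆ VR, (S.card : ℝ) ≤ (VR.card : ℝ) / 2 →
      (1 + α) * (S.card : ℝ) ≤ ((nbhd G S).card : ℝ))

/-- The square `G²` of a graph: two distinct vertices are adjacent iff their distance
in `G` is at most `2`. -/
def graphSquare {V : Type*} (G : SimpleGraph V) : SimpleGraph V where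
  Adj u v := u ≠ v ∧ (G.Adj u v ∨ ∃ w, G.Adj u w ∧ G.Adj w v)
  symm := by
    constructor
    intro u v h
    refine ⟨h.1.symm, ?_⟩
    rcases h.2 with h' | ⟨w, hw1, hw2⟩
    · exact Or.inl h'.symm
    · exact Or.inr ⟨w, hw2.symm, hw1.symm⟩
  loopless := ⟨fun u h => h.1 rfl⟩

/-- A polymer of the left hard-core polymer model: a nonempty subset of `VL` with
`|S| ≤ |VL|/2` inducing a connected subgraph of `G²`. -/
def IsHCPolymer {V : Type*} [Fintype V] (G : SimpleGraph V) (VL : Finset V)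
    (S : Finset V) : Prop :=
  S.Nonempty ∧ S ⊆ VL ∧ (S.card : ℝ) ≤ (VL.card : ℝ) / 2 ∧
    ((graphSquare G).induce (↑S : Set V)).Connected

/-- The weight `w_S = λ^{|S|}/(1+λ)^{|N_G(S)|}` of a polymer `S`. -/
noncomputable def hcWeight {V : Type*} [Fintype V] (G : SimpleGraph V) (lam : ℝ)
    (S : Finset V) : ℝ :=
  lam ^ S.card / (1 + lam) ^ (nbhd G S).card

/-- Two polymers are incompatible iff some vertex of one is at distance at most `2`
in `G` from some vertex of the other. -/
def HCIncomp {V : Type*} (G : SimpleGraph V) (S S' : Finset V) : Prop :=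
  ∃ u ∈ S, ∃ v ∈ S', u = v ∨ (graphSquare G).Adj u v

/-!
Let `H` be `G²` restricted to `V_L`; since `G` is bipartite, `H` has maximum degree
`D = Δ(Δ-1)`, and polymers are connected sets of `H`. Expansion gives
`w_S ≤ λ^{-α|S|} ≤ x^{|S|}` with `x = 0.8/(eΔ²)`. Connected sets through a root `u` are counted
by splitting off, at a neighbour `w` of `u`, the component of `w` in `A \ {u}`; by induction this
gives `∑ x^{|A|} ≤ x(1+C)^D ≤ C` and `∑ |A| x^{|A|} ≤ 1/(D+1)` for `C = 1/(2Δ²)`. A polymer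
incompatible with `S` contains a vertex of `S` or an `H`-neighbour of one, so it has one of at
most `|S|(D+1)` roots, whence the bound `|S|`; the clique dynamics condition follows from
`w/(1+w) ≤ w`.
-/

open Finset

theorem Finset.sum_le_sum_sum_of_forall_exists_mem {ι α M : Type*} [AddCommMonoid M]
    [PartialOrder M] [IsOrderedAddMonoid M] {s : Finset α} {I : Finset ι} {t : ι → Finset α}
    {f : α → M} (hf : ∀ a, 0 ≤ f a) (h : ∀ a ∈ s, ∃ i ∈ I, a ∈ t i) :
    ∑ a ∈ s, f a ≤ ∑ i ∈ I, ∑ a ∈ t i, f a := calc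
  ∑ a ∈ s, f a ≤ ∑ a ∈ (I.sigma t).image Sigma.snd, f a :=
    sum_le_sum_of_subset_of_nonneg (fun a ha => by
      obtain ⟨i, hi, hai⟩ := h a ha
      exact mem_image.2 ⟨⟨i, a⟩, mem_sigma.2 ⟨hi, hai⟩, rfl⟩) fun a _ _ => hf a
  _ ≤ ∑ p ∈ I.sigma t, f p.2 := sum_image_le_of_nonneg fun a _ => hf a
  _ = ∑ i ∈ I, ∑ a ∈ t i, f a := sum_sigma ..

namespace SimpleGraph

variable {V : Type*} (H : SimpleGraph V)

def ReachIn (A : Finset V) : V → V → Prop :=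
  Relation.ReflTransGen fun a b => H.Adj a b ∧ a ∈ A ∧ b ∈ A

def IsConnectedSet (A : Finset V) : Prop :=
  ∀ a ∈ A, ∀ b ∈ A, H.ReachIn A a b

/-- Empty if `w ∉ B`. -/
noncomputable def componentIn (B : Finset V) (w : V) : Finset V :=
  {z ∈ B | H.ReachIn B w z}

variable {H} {A B : Finset V} {a b u v w : V}

theorem ReachIn.mono (hAB : A ⊆ B) (h : H.ReachIn A a b) : H.ReachIn B a b :=
  Relation.ReflTransGen.mono (fun _ _ hs => ⟨hs.1, hAB hs.2.1, hAB hs.2.2⟩) a b h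

theorem ReachIn.symm (h : H.ReachIn A a b) : H.ReachIn A b a := by
  induction h with
  | refl => exact Relation.ReflTransGen.refl
  | tail _ hs ih => exact Relation.ReflTransGen.head ⟨hs.1.symm, hs.2.2, hs.2.1⟩ ih

theorem ReachIn.eq_or_mem (h : H.ReachIn A a b) : a = b ∨ b ∈ A := by
  induction h with
  | refl => exact Or.inl rfl
  | tail _ hs _ => exact Or.inr hs.2.2

theorem mem_componentIn : v ∈ H.componentIn B w ↔ v ∈ B ∧ H.ReachIn B w v :=
  mem_filter

theorem componentIn_subset : H.componentIn B w ⊆ B :=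
  filter_subset _ _

theorem self_mem_componentIn (hw : w ∈ B) : w ∈ H.componentIn B w :=
  mem_componentIn.2 ⟨hw, Relation.ReflTransGen.refl⟩

theorem mem_componentIn_of_reachIn (ha : a ∈ H.componentIn B w) (h : H.ReachIn B a b) :
    b ∈ H.componentIn B w := by
  rcases h.eq_or_mem with rfl | hb
  · exact ha
  · exact mem_componentIn.2 ⟨hb, (mem_componentIn.1 ha).2.trans h⟩

theorem ReachIn.reachIn_componentIn (h : H.ReachIn B w v) :
    H.ReachIn (H.componentIn B w) w v := by
  induction h with
  | refl => exact Relation.ReflTransGen.refl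
  | tail hwb hs ih =>
    exact ih.tail ⟨hs.1, mem_componentIn.2 ⟨hs.2.1, hwb⟩, mem_componentIn.2 ⟨hs.2.2, hwb.tail hs⟩⟩

theorem isConnectedSet_componentIn : H.IsConnectedSet (H.componentIn B w) := fun _ ha _ hb =>
  (mem_componentIn.1 ha).2.reachIn_componentIn.symm.trans
    (mem_componentIn.1 hb).2.reachIn_componentIn

theorem IsConnectedSet.exists_adj_reachIn_erase (hA : H.IsConnectedSet A) (hu : u ∈ A)
    (hv : v ∈ A) (hvu : v ≠ u) :
    ∃ w, H.Adj u w ∧ w ∈ A.erase u ∧ H.ReachIn (A.erase u) w v := by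
  suffices key : ∀ a, H.ReachIn A a u → a ∈ A →
      a = u ∨ ∃ w, H.Adj u w ∧ w ∈ A.erase u ∧ H.ReachIn (A.erase u) w a from
    (key v (hA v hv u hu) hv).resolve_left hvu
  intro a h
  induction h using Relation.ReflTransGen.head_induction_on with
  | refl => exact fun _ => Or.inl rfl
  | @head a c hac _ ih =>
    intro ha
    by_cases hau : a = u
    · exact Or.inl hau
    have ha' : a ∈ A.erase u := mem_erase.2 ⟨hau, ha⟩
    by_cases hcu : c = u
    · subst hcu
      exact Or.inr ⟨a, hac.1.symm, ha', Relation.ReflTransGen.refl⟩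
    obtain ⟨w, huw, hw, hwc⟩ := (ih hac.2.2).resolve_left hcu
    exact Or.inr ⟨w, huw, hw, hwc.tail ⟨hac.1.symm, mem_erase.2 ⟨hcu, hac.2.2⟩, ha'⟩⟩

theorem IsConnectedSet.sdiff_componentIn (hA : H.IsConnectedSet A) (hu : u ∈ A) (w : V) :
    H.IsConnectedSet (A \ H.componentIn (A.erase u) w) := by
  set T := H.componentIn (A.erase u) w
  have huT : u ∈ A \ T := mem_sdiff.2 ⟨hu, fun h => notMem_erase u A (componentIn_subset h)⟩
  suffices h : ∀ a ∈ A \ T, H.ReachIn (A \ T) u a from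
    fun a ha b hb => (h a ha).symm.trans (h b hb)
  intro a ha
  obtain ⟨haA, haT⟩ := mem_sdiff.1 ha
  by_cases hau : a = u
  · exact hau ▸ Relation.ReflTransGen.refl
  obtain ⟨w₁, huw₁, hw₁, hw₁a⟩ := hA.exists_adj_reachIn_erase hu haA hau
  have hsub : H.componentIn (A.erase u) w₁ ⊆ A \ T := fun z hz => by
    obtain ⟨hzA, hw₁z⟩ := mem_componentIn.1 hz
    refine mem_sdiff.2 ⟨mem_of_mem_erase hzA, fun hzT => haT ?_⟩
    exact mem_componentIn_of_reachIn (mem_componentIn_of_reachIn hzT hw₁z.symm) hw₁a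
  exact Relation.ReflTransGen.head ⟨huw₁, huT, hsub (self_mem_componentIn hw₁)⟩
    (hw₁a.reachIn_componentIn.mono hsub)

variable [Fintype V]

variable (H) in
noncomputable def connectedSetsAt (u : V) (L : Finset V) (n : ℕ) : Finset (Finset V) :=
  {A | u ∈ A ∧ #A ≤ n ∧ H.IsConnectedSet A ∧ Disjoint L A}

variable {L T R : Finset V} {n m : ℕ}

theorem mem_connectedSetsAt :
    A ∈ H.connectedSetsAt u L n ↔ u ∈ A ∧ #A ≤ n ∧ H.IsConnectedSet A ∧ Disjoint L A := by
  simp [connectedSetsAt]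

theorem connectedSetsAt_zero : H.connectedSetsAt u L 0 = ∅ :=
  eq_empty_of_forall_notMem fun A hA => by
    obtain ⟨hu, hA0, -⟩ := mem_connectedSetsAt.1 hA
    exact notMem_empty u (card_eq_zero.1 (Nat.le_zero.1 hA0) ▸ hu)

theorem connectedSetsAt_subset_singleton (hL : H.neighborFinset u ⊆ L) :
    H.connectedSetsAt u L n ⊆ {{u}} := fun A hA => by
  obtain ⟨hu, -, hconn, hdisj⟩ := mem_connectedSetsAt.1 hA
  refine mem_singleton.2 (eq_singleton_iff_unique_mem.2 ⟨hu, fun v hv => by_contra fun hvu => ?_⟩)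
  obtain ⟨w, huw, hw, -⟩ := hconn.exists_adj_reachIn_erase hu hv hvu
  exact Finset.disjoint_left.1 hdisj (hL ((mem_neighborFinset _ _ _).2 huw)) (mem_of_mem_erase hw)

theorem componentIn_erase_mem_connectedSetsAt (hA : A ∈ H.connectedSetsAt u L (n + 1))
    (hwA : w ∈ A) (hwu : w ≠ u) : H.componentIn (A.erase u) w ∈ H.connectedSetsAt w ∅ n := by
  obtain ⟨hu, hcard, -⟩ := mem_connectedSetsAt.1 hA
  refine mem_connectedSetsAt.2 ⟨self_mem_componentIn (mem_erase.2 ⟨hwu, hwA⟩), ?_,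
    isConnectedSet_componentIn, disjoint_empty_left _⟩
  have hTA : H.componentIn (A.erase u) w ⊆ A.erase u := componentIn_subset
  have := card_le_card hTA
  rw [card_erase_of_mem hu] at this
  omega

theorem sdiff_componentIn_erase_mem_connectedSetsAt (hA : A ∈ H.connectedSetsAt u L (n + 1))
    (hwA : w ∈ A) (hwu : w ≠ u) :
    A \ H.componentIn (A.erase u) w ∈
      H.connectedSetsAt u (L ∪ H.componentIn (A.erase u) w) n := by
  obtain ⟨hu, hcard, hconn, hdisj⟩ := mem_connectedSetsAt.1 hA
  have hTA : H.componentIn (A.erase u) w ⊆ A.erase u := componentIn_subset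
  refine mem_connectedSetsAt.2 ⟨mem_sdiff.2 ⟨hu, fun h => notMem_erase u A (hTA h)⟩, ?_,
    hconn.sdiff_componentIn hu w, disjoint_union_left.2 ⟨hdisj.mono_right sdiff_subset,
      disjoint_sdiff⟩⟩
  have := card_lt_card (sdiff_ssubset (hTA.trans (erase_subset u A))
    ⟨w, self_mem_componentIn (mem_erase.2 ⟨hwu, hwA⟩)⟩)
  omega

/-- A connected set `A ∋ u` either avoids `w`, or splits into the component `T ∋ w` of
`A \ {u}` and the connected rest `A \ T ∋ u`, which avoids `T`. -/
theorem sum_connectedSetsAt_succ_le {φ : Finset V → ℝ} (hφ : ∀ A, 0 ≤ φ A) (hwu : w ≠ u) :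
    ∑ A ∈ H.connectedSetsAt u L (n + 1), φ A ≤
      ∑ A ∈ H.connectedSetsAt u (insert w L) (n + 1), φ A +
        ∑ T ∈ H.connectedSetsAt w ∅ n, ∑ R ∈ H.connectedSetsAt u (L ∪ T) n, φ (T ∪ R) := by
  set s := H.connectedSetsAt u L (n + 1)
  rw [← sum_filter_not_add_sum_filter s (w ∈ ·), sum_sigma']
  gcongr ?_ + ?_
  · refine sum_le_sum_of_subset_of_nonneg (fun A hA => ?_) fun A _ _ => hφ A
    obtain ⟨hA, hwA⟩ := mem_filter.1 hA
    obtain ⟨hu, hcard, hconn, hdisj⟩ := mem_connectedSetsAt.1 hA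
    exact mem_connectedSetsAt.2 ⟨hu, hcard, hconn, disjoint_insert_left.2 ⟨hwA, hdisj⟩⟩
  set T : Finset V → Finset V := fun A => H.componentIn (A.erase u) w
  have hsplit : ∀ A ∈ s.filter (w ∈ ·),
      ⟨T A, A \ T A⟩ ∈ (H.connectedSetsAt w ∅ n).sigma (fun t => H.connectedSetsAt u (L ∪ t) n) ∧
        T A ∪ (A \ T A) = A := fun A hA => by
    obtain ⟨hA, hwA⟩ := mem_filter.1 hA
    exact ⟨mem_sigma.2 ⟨componentIn_erase_mem_connectedSetsAt hA hwA hwu,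
      sdiff_componentIn_erase_mem_connectedSetsAt hA hwA hwu⟩,
      union_sdiff_of_subset (componentIn_subset.trans (erase_subset u A))⟩
  set ι : Finset V → Σ _ : Finset V, Finset V := fun A => ⟨T A, A \ T A⟩
  have hι : Set.InjOn ι (s.filter (w ∈ ·)) := fun A hA B hB hAB => by
    rw [← (hsplit A hA).2, ← (hsplit B hB).2]
    simp only [ι, Sigma.mk.injEq, heq_eq_eq] at hAB
    rw [hAB.2, hAB.1]
  calc ∑ A ∈ s.filter (w ∈ ·), φ A
      = ∑ A ∈ s.filter (w ∈ ·), φ ((ι A).1 ∪ (ι A).2) :=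
        sum_congr rfl fun A hA => by rw [(hsplit A hA).2]
    _ = ∑ p ∈ (s.filter (w ∈ ·)).image ι, φ (p.1 ∪ p.2) :=
        (sum_image (f := fun p => φ (p.1 ∪ p.2)) hι).symm
    _ ≤ _ := sum_le_sum_of_subset_of_nonneg
        (image_subset_iff.2 fun A hA => (hsplit A hA).1) fun p _ _ => hφ _

theorem sum_connectedSetsAt_le_of_neighborFinset_subset {φ : Finset V → ℝ} (hφ : ∀ A, 0 ≤ φ A)
    (hL : H.neighborFinset u ⊆ L) : ∑ A ∈ H.connectedSetsAt u L n, φ A ≤ φ {u} := by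
  simpa using sum_le_sum_of_subset_of_nonneg (connectedSetsAt_subset_singleton (n := n) hL)
    fun A _ _ => hφ A

theorem card_neighborFinset_sdiff_le (hw : w ∈ H.neighborFinset u \ L)
    (hm : #(H.neighborFinset u \ L) ≤ m + 1) {L' : Finset V} (hL' : insert w L ⊆ L') :
    #(H.neighborFinset u \ L') ≤ m := by
  have : H.neighborFinset u \ L' ⊆ (H.neighborFinset u \ L).erase w := fun v hv => by
    obtain ⟨hvN, hvL'⟩ := mem_sdiff.1 hv
    exact mem_erase.2 ⟨fun h => hvL' (hL' (h ▸ mem_insert_self w L)),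
      mem_sdiff.2 ⟨hvN, fun h => hvL' (hL' (mem_insert_of_mem h))⟩⟩
  have := card_le_card this
  rw [card_erase_of_mem hw] at this
  omega

theorem card_neighborFinset_sdiff_union_le (hw : w ∈ H.neighborFinset u \ L)
    (hm : #(H.neighborFinset u \ L) ≤ m + 1) (hT : T ∈ H.connectedSetsAt w ∅ n) :
    #(H.neighborFinset u \ (L ∪ T)) ≤ m :=
  card_neighborFinset_sdiff_le hw hm
    (insert_subset (mem_union_right L (mem_connectedSetsAt.1 hT).1) subset_union_left)

theorem card_union_of_mem_connectedSetsAt (hR : R ∈ H.connectedSetsAt u (L ∪ T) n) :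
    #(T ∪ R) = #T + #R :=
  card_union_of_disjoint ((mem_connectedSetsAt.1 hR).2.2.2.mono_left subset_union_right)

variable {x C K : ℝ} {D : ℕ}

theorem sum_pow_card_union_connectedSetsAt :
    ∑ R ∈ H.connectedSetsAt u (L ∪ T) n, x ^ #(T ∪ R) =
      x ^ #T * ∑ R ∈ H.connectedSetsAt u (L ∪ T) n, x ^ #R := by
  rw [mul_sum]
  exact sum_congr rfl fun R hR => by rw [card_union_of_mem_connectedSetsAt hR, pow_add]

theorem sum_card_mul_pow_card_union_connectedSetsAt :
    ∑ R ∈ H.connectedSetsAt u (L ∪ T) n, (#(T ∪ R) : ℝ) * x ^ #(T ∪ R) =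
      #T * x ^ #T * ∑ R ∈ H.connectedSetsAt u (L ∪ T) n, x ^ #R +
        x ^ #T * ∑ R ∈ H.connectedSetsAt u (L ∪ T) n, (#R : ℝ) * x ^ #R := by
  rw [mul_sum, mul_sum, ← sum_add_distrib]
  refine sum_congr rfl fun R hR => ?_
  rw [card_union_of_mem_connectedSetsAt hR, pow_add]
  push_cast
  ring

theorem sum_pow_card_connectedSetsAt_le (hx : 0 ≤ x) (hC : 0 ≤ C)
    (hdeg : ∀ v, H.degree v ≤ D) (hxC : x * (1 + C) ^ D ≤ C) (n : ℕ) (u : V) (L : Finset V)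
    (m : ℕ) (hm : #(H.neighborFinset u \ L) ≤ m) :
    ∑ A ∈ H.connectedSetsAt u L n, x ^ #A ≤ x * (1 + C) ^ m := by
  induction n generalizing u L m with
  | zero => simp only [connectedSetsAt_zero, sum_empty]; positivity
  | succ n ih =>
    have hT : ∀ w, ∑ T ∈ H.connectedSetsAt w ∅ n, x ^ #T ≤ C := fun w =>
      (ih w ∅ D (by simpa using hdeg w)).trans hxC
    have hbase : ∀ L, H.neighborFinset u ⊆ L → ∀ m,
        ∑ A ∈ H.connectedSetsAt u L (n + 1), x ^ #A ≤ x * (1 + C) ^ m := fun L hL m =>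
      (sum_connectedSetsAt_le_of_neighborFinset_subset (fun _ => pow_nonneg hx _) hL).trans
        (by simpa using le_mul_of_one_le_right hx (one_le_pow₀ (by linarith)))
    induction m generalizing L with
    | zero => exact hbase L (sdiff_eq_empty_iff_subset.1 (card_eq_zero.1 (by omega))) 0
    | succ m ihm =>
      by_cases hN : H.neighborFinset u ⊆ L
      · exact hbase L hN _
      obtain ⟨w, hw⟩ := sdiff_nonempty.2 hN
      have hwu : w ≠ u := ((mem_neighborFinset _ _ _).1 (mem_sdiff.1 hw).1).ne'
      calc _ ≤ _ := sum_connectedSetsAt_succ_le (fun _ => pow_nonneg hx _) hwu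
        _ ≤ x * (1 + C) ^ m + ∑ T ∈ H.connectedSetsAt w ∅ n, x ^ #T * (x * (1 + C) ^ m) := by
          gcongr with T hT
          · exact ihm _ (card_neighborFinset_sdiff_le hw hm subset_rfl)
          · rw [sum_pow_card_union_connectedSetsAt]
            gcongr
            exact ih u _ m (card_neighborFinset_sdiff_union_le hw hm hT)
        _ ≤ x * (1 + C) ^ m + C * (x * (1 + C) ^ m) := by rw [← sum_mul]; gcongr; exact hT w
        _ = x * (1 + C) ^ (m + 1) := by ring

theorem sum_card_mul_pow_card_connectedSetsAt_le (hx : 0 ≤ x) (hC : 0 ≤ C) (hK : 0 ≤ K)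
    (hdeg : ∀ v, H.degree v ≤ D) (hxC : x * (1 + C) ^ D ≤ C)
    (hxK : x * (1 + C) ^ D * (1 + K * D) ≤ K) (n : ℕ) (u : V) (L : Finset V)
    (m : ℕ) (hm : #(H.neighborFinset u \ L) ≤ m) :
    ∑ A ∈ H.connectedSetsAt u L n, (#A : ℝ) * x ^ #A ≤ x * (1 + C) ^ m * (1 + K * m) := by
  induction n generalizing u L m with
  | zero => simp only [connectedSetsAt_zero, sum_empty]; positivity
  | succ n ih =>
    have hT : ∀ w, ∑ T ∈ H.connectedSetsAt w ∅ n, (#T : ℝ) * x ^ #T ≤ K := fun w =>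
      (ih w ∅ D (by simpa using hdeg w)).trans hxK
    have hbase : ∀ L, H.neighborFinset u ⊆ L → ∀ m : ℕ,
        ∑ A ∈ H.connectedSetsAt u L (n + 1), (#A : ℝ) * x ^ #A ≤
          x * (1 + C) ^ m * (1 + K * m) := fun L hL m =>
      (sum_connectedSetsAt_le_of_neighborFinset_subset (fun _ => by positivity) hL).trans
        (by
          rw [card_singleton, Nat.cast_one, one_mul, pow_one, mul_assoc]
          exact le_mul_of_one_le_right hx (one_le_mul_of_one_le_of_one_le
            (one_le_pow₀ (by linarith)) (le_add_of_nonneg_right (by positivity))))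
    induction m generalizing L with
    | zero => exact hbase L (sdiff_eq_empty_iff_subset.1 (card_eq_zero.1 (by omega))) 0
    | succ m ihm =>
      by_cases hN : H.neighborFinset u ⊆ L
      · exact hbase L hN _
      obtain ⟨w, hw⟩ := sdiff_nonempty.2 hN
      have hwu : w ≠ u := ((mem_neighborFinset _ _ _).1 (mem_sdiff.1 hw).1).ne'
      set z := (1 + C) ^ m with hz
      calc _ ≤ _ := sum_connectedSetsAt_succ_le (fun _ => by positivity) hwu
        _ ≤ x * z * (1 + K * m) + ∑ T ∈ H.connectedSetsAt w ∅ n,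
              ((#T : ℝ) * x ^ #T * (x * z) + x ^ #T * (x * z * (1 + K * m))) := by
          gcongr with T hT
          · exact ihm _ (card_neighborFinset_sdiff_le hw hm subset_rfl)
          have hL := card_neighborFinset_sdiff_union_le hw hm hT
          rw [sum_card_mul_pow_card_union_connectedSetsAt]
          gcongr
          · exact sum_pow_card_connectedSetsAt_le hx hC hdeg hxC n u _ m hL
          · exact ih u _ m hL
        _ ≤ x * z * (1 + K * m) + (K * (x * z) + C * (x * z * (1 + K * m))) := by
          rw [sum_add_distrib, ← sum_mul, ← sum_mul]
          gcongr
          · exact hT w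
          · exact (sum_pow_card_connectedSetsAt_le hx hC hdeg hxC n w ∅ D
              (by simpa using hdeg w)).trans hxC
        _ ≤ x * (1 + C) ^ (m + 1) * (1 + K * (m + 1 : ℕ)) := by
          have : 0 ≤ x * z * K * C := by positivity
          rw [pow_succ, ← hz]
          push_cast
          linarith

end SimpleGraph

open Real in
theorem pow_div_one_add_pow_le_inv_pow {lam M α : ℝ} {k m : ℕ} (hα : 0 < α) (hM : 1 ≤ M)
    (hlam : M ^ α⁻¹ ≤ lam) (hkm : (1 + α) * k ≤ m) : lam ^ k / (1 + lam) ^ m ≤ M⁻¹ ^ k := by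
  have hlam1 : 1 ≤ lam := (one_le_rpow hM (inv_nonneg.2 hα.le)).trans hlam
  have hMlam : M ≤ lam ^ α := (rpow_inv_le_iff_of_pos (by linarith) (by linarith) hα).1 hlam
  have key : M ^ k * lam ^ k ≤ (1 + lam) ^ m := calc
    M ^ k * lam ^ k ≤ (lam ^ α) ^ k * lam ^ k := by gcongr
    _ = lam ^ (α * k + k) := by
      rw [← rpow_natCast (lam ^ α), ← rpow_mul (by linarith), ← rpow_natCast lam k,
        ← rpow_add (by linarith)]
    _ ≤ lam ^ m := by
      rw [← rpow_natCast lam m]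
      exact rpow_le_rpow_of_exponent_le hlam1 (by linarith)
    _ ≤ (1 + lam) ^ m := by gcongr; linarith
  rw [div_le_iff₀ (by positivity), inv_pow, inv_mul_eq_div, le_div_iff₀ (by positivity)]
  linarith

/-- Via `(1 + 1/(2Δ²))^{Δ(Δ-1)} ≤ e^{1/2}`, this reduces to `1.6 ≤ e^{1/2}`: it is where the
constant `eΔ²/0.8` comes from. -/
theorem inv_mul_one_add_pow_le (Δ : ℕ) (hΔ : 1 ≤ Δ) :
    (Real.exp 1 * (Δ : ℝ) ^ 2 / 0.8)⁻¹ * (1 + 1 / (2 * (Δ : ℝ) ^ 2)) ^ (Δ * (Δ - 1)) ≤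
      1 / (2 * (Δ : ℝ) ^ 2) := by
  have hΔ' : (1 : ℝ) ≤ Δ := by exact_mod_cast hΔ
  have hsq : Real.exp (1 / 2) * Real.exp (1 / 2) = Real.exp 1 := by
    rw [← Real.exp_add]; norm_num
  have hE : 1.6 ≤ Real.exp (1 / 2) := by
    nlinarith [Real.exp_one_gt_d9, Real.exp_pos (1 / 2)]
  have hpow : (1 + 1 / (2 * (Δ : ℝ) ^ 2)) ^ (Δ * (Δ - 1)) ≤ Real.exp (1 / 2) := calc
    _ ≤ Real.exp (1 / (2 * (Δ : ℝ) ^ 2)) ^ (Δ * (Δ - 1)) := by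
      gcongr; linarith [Real.add_one_le_exp (1 / (2 * (Δ : ℝ) ^ 2))]
    _ = Real.exp ((Δ ^ 2 - Δ) / (2 * Δ ^ 2)) := by
      rw [← Real.exp_nat_mul, Nat.cast_mul, Nat.cast_sub hΔ]
      congr 1
      field_simp
      ring
    _ ≤ Real.exp (1 / 2) := by
      refine Real.exp_le_exp.2 ?_
      rw [div_le_div_iff₀ (by positivity) (by norm_num)]
      nlinarith
  calc _ ≤ (Real.exp 1 * (Δ : ℝ) ^ 2 / 0.8)⁻¹ * Real.exp (1 / 2) := by gcongr
    _ = 0.8 / (Real.exp (1 / 2) * Δ ^ 2) := by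
      rw [← hsq]; field_simp
    _ ≤ 1 / (2 * (Δ : ℝ) ^ 2) := by
      rw [div_le_div_iff₀ (by positivity) (by positivity)]
      nlinarith

section HardCore

variable {V : Type*} [Fintype V] {G : SimpleGraph V} {VL VR S S' : Finset V} {u w : V}

def leftSquare (G : SimpleGraph V) (VL : Finset V) : SimpleGraph V where
  Adj a b := (graphSquare G).Adj a b ∧ a ∈ VL ∧ b ∈ VL
  symm := ⟨fun _ _ h => ⟨h.1.symm, h.2.2, h.2.1⟩⟩
  loopless := ⟨fun _ h => h.1.1 rfl⟩

theorem mem_nbhd_singleton : w ∈ nbhd G {u} ↔ G.Adj u w := by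
  simp [nbhd]

/-- In a bipartite graph two left vertices are never adjacent, so a `G²`-neighbour of a left
vertex is reached by a path `u - w - v`, with `Δ` choices of `w` and `Δ - 1` of `v ≠ u`. -/
theorem degree_leftSquare_le (hbip : IsBipartition G VL VR) {Δ : ℕ}
    (hdeg : ∀ v : V, #(nbhd G {v}) ≤ Δ) (u : V) : (leftSquare G VL).degree u ≤ Δ * (Δ - 1) := by
  have hsub : (leftSquare G VL).neighborFinset u ⊆ (nbhd G {u}).biUnion fun w =>
      (nbhd G {w}).erase u := fun v hv => by
    obtain ⟨⟨hne, hadj⟩, huL, hvL⟩ := (SimpleGraph.mem_neighborFinset _ _ _).1 hv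
    obtain ⟨w, huw, hwv⟩ : ∃ w, G.Adj u w ∧ G.Adj w v := hadj.resolve_left fun huv => by
      rcases hbip.2.2 u v huv with ⟨-, hvR⟩ | ⟨huR, -⟩
      · exact Finset.disjoint_left.1 hbip.1 hvL hvR
      · exact Finset.disjoint_left.1 hbip.1 huL huR
    exact mem_biUnion.2
      ⟨w, mem_nbhd_singleton.2 huw, mem_erase.2 ⟨hne.symm, mem_nbhd_singleton.2 hwv⟩⟩
  calc (leftSquare G VL).degree u ≤ ∑ w ∈ nbhd G {u}, #((nbhd G {w}).erase u) :=
        (card_le_card hsub).trans card_biUnion_le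
    _ ≤ ∑ _w ∈ nbhd G {u}, (Δ - 1) := sum_le_sum fun w hw => by
        rw [card_erase_of_mem (mem_nbhd_singleton.2 (mem_nbhd_singleton.1 hw).symm)]
        exact Nat.sub_le_sub_right (hdeg w) 1
    _ ≤ Δ * (Δ - 1) := by rw [sum_const, smul_eq_mul]; exact Nat.mul_le_mul_right _ (hdeg u)

theorem IsHCPolymer.isConnectedSet (h : IsHCPolymer G VL S) :
    (leftSquare G VL).IsConnectedSet S := by
  have walk : ∀ a b : (S : Set V), ((graphSquare G).induce (S : Set V)).Walk a b →
      (leftSquare G VL).ReachIn S a b := by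
    intro a b p
    induction p with
    | nil => exact Relation.ReflTransGen.refl
    | cons hadj _ ih =>
      exact Relation.ReflTransGen.head
        ⟨⟨hadj, h.2.1 (Subtype.property _), h.2.1 (Subtype.property _)⟩,
          Subtype.property _, Subtype.property _⟩ ih
  exact fun a ha b hb => walk ⟨a, ha⟩ ⟨b, hb⟩ (h.2.2.2.preconnected ⟨a, ha⟩ ⟨b, hb⟩).some

theorem exists_mem_connectedSetsAt_of_hcIncomp (hS : S ⊆ VL) (hS' : IsHCPolymer G VL S')
    (hinc : HCIncomp G S S') : ∃ v ∈ S, ∃ u ∈ insert v ((leftSquare G VL).neighborFinset v),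
      S' ∈ (leftSquare G VL).connectedSetsAt u ∅ (Fintype.card V) := by
  obtain ⟨v, hv, u, hu, hvu⟩ := hinc
  refine ⟨v, hv, u, ?_, SimpleGraph.mem_connectedSetsAt.2
    ⟨hu, card_le_univ S', hS'.isConnectedSet, disjoint_empty_left _⟩⟩
  rcases hvu with rfl | hadj
  · exact mem_insert_self _ _
  · exact mem_insert_of_mem ((SimpleGraph.mem_neighborFinset _ _ _).2 ⟨hadj, hS hv, hS'.2.1 hu⟩)

theorem sum_hcIncomp_le_sum_connectedSetsAt (hS : S ⊆ VL) {f : Finset V → ℝ}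
    (hf : ∀ A, 0 ≤ f A) :
    ∑ S' ∈ univ.filter fun S' => IsHCPolymer G VL S' ∧ HCIncomp G S S', f S' ≤
      ∑ v ∈ S, ∑ u ∈ insert v ((leftSquare G VL).neighborFinset v),
        ∑ A ∈ (leftSquare G VL).connectedSetsAt u ∅ (Fintype.card V), f A := by
  rw [sum_sigma' S]
  refine sum_le_sum_sum_of_forall_exists_mem hf fun S' hS' => ?_
  obtain ⟨hpoly, hinc⟩ := (mem_filter.1 hS').2
  obtain ⟨v, hv, u, hu, hS'u⟩ := exists_mem_connectedSetsAt_of_hcIncomp hS hpoly hinc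
  exact ⟨⟨v, u⟩, mem_sigma.2 ⟨hv, hu⟩, hS'u⟩

end HardCore

theorem sum_card_mul_hcWeight_hcIncomp_le {V : Type*} [Fintype V] {G : SimpleGraph V}
    {VL VR : Finset V} {α : ℝ} (hα : 0 < α) (hexp : IsBipartiteExpander G VL VR α) {Δ : ℕ}
    (hΔ : 1 ≤ Δ) (hdeg : ∀ v : V, #(nbhd G {v}) ≤ Δ) {lam : ℝ}
    (hlam : (Real.exp 1 * (Δ : ℝ) ^ 2 / 0.8) ^ α⁻¹ ≤ lam) {S : Finset V} (hS : S ⊆ VL) :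
    ∑ S' ∈ univ.filter fun S' => IsHCPolymer G VL S' ∧ HCIncomp G S S',
      (#S' : ℝ) * hcWeight G lam S' ≤ #S := by
  set H := leftSquare G VL
  set D := Δ * (Δ - 1)
  set x := (Real.exp 1 * (Δ : ℝ) ^ 2 / 0.8)⁻¹
  set C := 1 / (2 * (Δ : ℝ) ^ 2)
  set K := 1 / ((D : ℝ) + 1)
  have hΔ' : (1 : ℝ) ≤ Δ := by exact_mod_cast hΔ
  have hM : 1 ≤ Real.exp 1 * (Δ : ℝ) ^ 2 / 0.8 := by
    rw [le_div_iff₀ (by norm_num)]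
    nlinarith [Real.exp_one_gt_d9]
  have hx : 0 ≤ x := by positivity
  have hxC : x * (1 + C) ^ D ≤ C := inv_mul_one_add_pow_le Δ hΔ
  have hxK : x * (1 + C) ^ D * (1 + K * D) ≤ K := by
    have hD : (D : ℝ) = Δ ^ 2 - Δ := by
      rw [Nat.cast_mul, Nat.cast_sub hΔ]; push_cast; ring
    calc _ ≤ C * (1 + K * D) := by gcongr
      _ ≤ K := by
        simp only [C, K]
        field_simp
        rw [hD]
        nlinarith
  have hdegH (v : V) : H.degree v ≤ D := degree_leftSquare_le hexp.1 hdeg v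
  have hweight : ∀ S', IsHCPolymer G VL S' → hcWeight G lam S' ≤ x ^ #S' := fun S' hS' =>
    pow_div_one_add_pow_le_inv_pow hα hM hlam (hexp.2.1 S' hS'.2.1 hS'.2.2.1)
  calc _ ≤ ∑ S' ∈ univ.filter fun S' => IsHCPolymer G VL S' ∧ HCIncomp G S S',
        (#S' : ℝ) * x ^ #S' := sum_le_sum fun S' hS' => by
          gcongr; exact hweight S' (mem_filter.1 hS').2.1
    _ ≤ ∑ v ∈ S, ∑ u ∈ insert v (H.neighborFinset v),
          ∑ A ∈ H.connectedSetsAt u ∅ (Fintype.card V), (#A : ℝ) * x ^ #A :=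
      sum_hcIncomp_le_sum_connectedSetsAt hS fun _ => by positivity
    _ ≤ ∑ v ∈ S, ∑ _u ∈ insert v (H.neighborFinset v), K := by
      gcongr with v _ u _
      exact (SimpleGraph.sum_card_mul_pow_card_connectedSetsAt_le hx (by positivity)
        (by positivity) hdegH hxC hxK _ u ∅ D (by simpa using hdegH u)).trans hxK
    _ ≤ ∑ _v ∈ S, (1 : ℝ) := sum_le_sum fun v _ => by
      rw [sum_const, nsmul_eq_mul]
      calc (#(insert v (H.neighborFinset v)) : ℝ) * K ≤ ((D : ℝ) + 1) * K := by
            gcongr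
            exact_mod_cast (card_insert_le _ _).trans (Nat.add_le_add_right (hdegH v) 1)
        _ = 1 := mul_one_div_cancel (by positivity)
    _ = #S := by simp

/-- For the left hard-core polymer model on a bipartite `α`-expander
of maximum degree at most `Δ` with `λ ≥ (eΔ²/0.8)^{1/α}`, for every polymer `S` the sum
of `|S'|·w_{S'}` over all polymers `S'` incompatible with `S` (including `S` itself) is
at most `|S|`; consequently the model satisfies the clique dynamics condition with
`f(S) = |S|`. -/
theorem hardcore_clique_dynamics_condition {V : Type*} [Fintype V] (G : SimpleGraph V)
    (VL VR : Finset V) (α : ℝ) (hα : α ∈ Set.Ioo (0 : ℝ) 1)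
    (hexp : IsBipartiteExpander G VL VR α)
    (Δ : ℕ) (hΔ : 1 ≤ Δ) (hdeg : ∀ v : V, (nbhd G {v}).card ≤ Δ)
    (lam : ℝ) (hlam : (Real.exp 1 * (Δ : ℝ) ^ 2 / 0.8) ^ (α⁻¹) ≤ lam)
    (S : Finset V) (hS : IsHCPolymer G VL S) :
    (∑ S' ∈ Finset.univ.filter fun S' => IsHCPolymer G VL S' ∧ HCIncomp G S S',
        (S'.card : ℝ) * hcWeight G lam S') ≤ (S.card : ℝ) ∧
    ∀ S₀ : Finset V, IsHCPolymer G VL S₀ →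
      (∑ S' ∈ Finset.univ.filter fun S' =>
            IsHCPolymer G VL S' ∧ HCIncomp G S₀ S' ∧ S' ≠ S₀,
          (S'.card : ℝ) * hcWeight G lam S' / (1 + hcWeight G lam S'))
        ≤ (S₀.card : ℝ) := by
  have hsum {S₀} (hS₀ : IsHCPolymer G VL S₀) :=
    sum_card_mul_hcWeight_hcIncomp_le hα.1 hexp hΔ hdeg hlam hS₀.2.1
  refine ⟨hsum hS, fun S₀ hS₀ => le_trans ?_ (hsum hS₀)⟩
  have hw (T : Finset V) : 0 ≤ hcWeight G lam T := by
    have : 0 ≤ lam := (Real.rpow_nonneg (by positivity) _).trans hlam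
    unfold hcWeight; positivity
  calc _ ≤ ∑ S' ∈ Finset.univ.filter fun S' =>
          IsHCPolymer G VL S' ∧ HCIncomp G S₀ S' ∧ S' ≠ S₀, (S'.card : ℝ) * hcWeight G lam S' :=
        sum_le_sum fun T _ => div_le_self (by have := hw T; positivity) (by linarith [hw T])
    _ ≤ _ := sum_le_sum_of_subset_of_nonneg (fun T => by simp only [mem_filter]; tauto)
        fun T _ _ => by have := hw T; positivity
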